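/- Let G be a static graph with n nodes and let G_ℕ be the induced ℕ-periodic graph. Suppose G contains a path p = q_1 p' q_2 where q_1, q_2 are circuits with len(q_1) ≤ n, len(q_2) ≤ n, shifts s_1 > 0 and s_2 < 0, and weights w_1, w_2 satisfying −s_2·w_1 + s_1·w_2 > 0. Then G_ℕ contains an ∞-weight path; in particular, the paths r^{(h)} = q_1^{−s_2·h} p' q_2^{s_1·h} for h = 1, 2, … all have left-shift at least lshift(p') − n, hence induce paths in G_ℕ from a common source node to a common target node with strictly increasing weights. -/

import Mathlib

namespace Periodic

/-- An arc of a static graph: a source node, a target node, and a shift. -/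
structure Arc (n : ℕ) where
  src : Fin n
  tgt : Fin n
  shift : ℤ
deriving DecidableEq

/-- A static graph on `n` nodes, given by three matrices with entries in `ℚ ∪ {-∞}`. -/
structure StaticGraph (n : ℕ) where
  Mneg : Matrix (Fin n) (Fin n) (WithBot ℚ)
  Mzero : Matrix (Fin n) (Fin n) (WithBot ℚ)
  Mpos : Matrix (Fin n) (Fin n) (WithBot ℚ)

/-- The matrix associated to shift `s` (the all `-∞` matrix if `s ∉ {-1,0,1}`). -/
def StaticGraph.M {n : ℕ} (G : StaticGraph n) (s : ℤ) : Matrix (Fin n) (Fin n) (WithBot ℚ) :=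
  if s = -1 then G.Mneg else if s = 0 then G.Mzero else if s = 1 then G.Mpos
  else Matrix.of fun _ _ => ⊥

/-- `e` is an arc of `G` iff the corresponding matrix entry is not `-∞`. -/
def StaticGraph.IsArc {n : ℕ} (G : StaticGraph n) (e : Arc n) : Prop :=
  G.M e.shift e.tgt e.src ≠ ⊥

/-- The (rational) weight of an arc. -/
def StaticGraph.w {n : ℕ} (G : StaticGraph n) (e : Arc n) : ℚ :=
  (G.M e.shift e.tgt e.src).unbotD 0

/-- A path in the static graph `G`: a first node together with a compatible list of arcs. -/
structure SPath {n : ℕ} (G : StaticGraph n) where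
  first : Fin n
  arcs : List (Arc n)
  valid : ∀ e ∈ arcs, G.IsArc e
  startOk : ∀ e ∈ arcs.head?, e.src = first
  chainOk : arcs.Chain' (fun e f => e.tgt = f.src)

namespace SPath

variable {n : ℕ} {G : StaticGraph n}

/-- The last node of a path. -/
def last (p : SPath G) : Fin n := (p.arcs.getLast?).elim p.first Arc.tgt

/-- The length of a path. -/
def len (p : SPath G) : ℕ := p.arcs.length

/-- The shift of a path. -/
def shift (p : SPath G) : ℤ := (p.arcs.map Arc.shift).sum

/-- The weight of a path. -/
def weight (p : SPath G) : ℚ := (p.arcs.map G.w).sum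

/-- The sum of the shifts of the first `i` arcs of a path. -/
def prefixShift (p : SPath G) (i : ℕ) : ℤ := ((p.arcs.take i).map Arc.shift).sum

/-- The left-shift of a path: the minimum of all prefix sums of arc shifts. -/
def lshift (p : SPath G) : ℤ :=
  Finset.univ.inf' Finset.univ_nonempty
    (fun i : Fin (p.arcs.length + 1) => p.prefixShift i)

/-- A path is a circuit if its first and last nodes coincide. -/
def IsCircuit (p : SPath G) : Prop := p.first = p.last

/-- The sequence of nodes visited by a path. -/
def nodes (p : SPath G) : List (Fin n) := p.first :: p.arcs.map Arc.tgt

/-- An elementary circuit: a nonempty circuit whose nodes, except the last one,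
are pairwise distinct. -/
def IsElemCircuit (p : SPath G) : Prop :=
  p.IsCircuit ∧ p.arcs ≠ [] ∧ p.nodes.dropLast.Nodup

/-- Concatenation of two paths with matching endpoints. -/
def append (p q : SPath G) (h : q.first = p.last) : SPath G where
  first := p.first
  arcs := p.arcs ++ q.arcs
  valid := by
    intro e he
    rcases List.mem_append.mp he with h' | h'
    · exact p.valid e h'
    · exact q.valid e h'
  startOk := by
    intro e he
    cases hp : p.arcs with
    | nil =>
      rw [hp] at he
      simp only [List.nil_append] at he
      rw [q.startOk e he, h]
      simp [SPath.last, hp]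
    | cons a l =>
      rw [hp] at he
      simp only [List.cons_append, List.head?_cons, Option.mem_def, Option.some.injEq] at he
      subst he
      exact p.startOk a (by rw [hp]; rfl)
  chainOk := by
    apply List.IsChain.append p.chainOk q.chainOk
    intro x hx y hy
    have h1 : y.src = q.first := q.startOk y hy
    have hx' : p.arcs.getLast? = some x := hx
    have h2 : p.last = x.tgt := by simp [SPath.last, hx']
    show x.tgt = y.src
    rw [h1, h, h2]

theorem last_append (p q : SPath G) (h : q.first = p.last) :
    (p.append q h).last = q.last := by
  cases hq : q.arcs with
  | nil =>
    have hql : q.last = q.first := by simp [SPath.last, hq]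
    simp [SPath.append, SPath.last, hq, hql, h]
  | cons a l =>
    have hx : (a :: l).getLast? = some ((a :: l).getLast (by simp)) :=
      List.getLast?_eq_some_getLast (by simp)
    simp [SPath.append, SPath.last, hq, List.getLast?_append, hx]

/-- The empty path at node `i`. -/
def nil (G : StaticGraph n) (i : Fin n) : SPath G :=
  ⟨i, [], by simp, by simp, List.isChain_nil⟩

/-- Auxiliary construction for powers of a circuit. -/
def npowAux (q : SPath G) (h : q.IsCircuit) :
    (x : ℕ) → {r : SPath G // r.first = q.first ∧ r.last = q.first}
  | 0 => ⟨SPath.nil G q.first, rfl, by simp [SPath.last, SPath.nil]⟩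
  | x + 1 =>
    let r := npowAux q h x
    ⟨q.append r.1 (r.2.1.trans h), rfl, (last_append q r.1 _).trans r.2.2⟩

/-- The `x`-fold concatenation `q^x` of a circuit `q` with itself. -/
def npow (q : SPath G) (h : q.IsCircuit) (x : ℕ) : SPath G := (npowAux q h x).1

theorem npow_first (q : SPath G) (h : q.IsCircuit) (x : ℕ) :
    (npow q h x).first = q.first := (npowAux q h x).2.1

theorem npow_last (q : SPath G) (h : q.IsCircuit) (x : ℕ) :
    (npow q h x).last = q.first := (npowAux q h x).2.2

/-- Concatenation of a nonempty list of paths with matching endpoints. -/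
def concatChain (p : SPath G) :
    (l : List (SPath G)) → (p :: l).Chain' (fun a b => b.first = a.last) →
      {r : SPath G // r.first = p.first}
  | [], _ => ⟨p, rfl⟩
  | q :: l, h =>
    let rest := concatChain q l (List.isChain_cons_cons.mp h).2
    ⟨p.append rest.1 (rest.2.trans (List.isChain_cons_cons.mp h).1), rfl⟩

/-- The path `p`, started at shift `k`, visits only shifts belonging to `S`;
i.e., `(p, k)` represents a path of the `S`-periodic graph `G_S`. -/
def shiftsIn (p : SPath G) (k : ℤ) (S : Set ℤ) : Prop :=
  ∀ i ≤ p.arcs.length, k + p.prefixShift i ∈ S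

end SPath

/-- The set of positive integers (the paper's `ℕ`). -/
def Spos : Set ℤ := {k | 0 < k}

/-- The set of integers `k` with `-n ≤ k ≤ n`. -/
def Sint (n : ℕ) : Set ℤ := {k | -(n : ℤ) ≤ k ∧ k ≤ (n : ℤ)}

/-- The `S`-periodic graph `G_S` contains an `∞`-weight path: there are nodes `u, v` of `G_S`
and an infinite sequence of paths of `G_S` from `u` to `v` with strictly increasing weights. -/
def HasInfWeightPath {n : ℕ} (G : StaticGraph n) (S : Set ℤ) : Prop :=
  ∃ u v : Fin n × ℤ, ∃ (p : ℕ → SPath G) (k : ℕ → ℤ),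
    (∀ h, (p h).shiftsIn (k h) S) ∧
    (∀ h, ((p h).first, k h) = u ∧ ((p h).last, k h + (p h).shift) = v) ∧
    ∀ h, (p h).weight < (p (h + 1)).weight

/-- The `S`-periodic graph `G_S` contains a circuit with positive weight. -/
def HasPosWeightCircuit {n : ℕ} (G : StaticGraph n) (S : Set ℤ) : Prop :=
  ∃ (p : SPath G) (k : ℤ), p.shiftsIn k S ∧ p.IsCircuit ∧ p.shift = 0 ∧ 0 < p.weight

end Periodic

namespace Periodic

variable {n : ℕ} {G : StaticGraph n}

/-- The inner nodes of a path: all visited nodes except the first and the last one. -/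
def SPath.innerNodes (p : SPath G) : List (Fin n) := (p.nodes.drop 1).dropLast

/-- `p` splits as the concatenation `u q v`. -/
def Splits (p u q v : SPath G) : Prop :=
  p.first = u.first ∧ p.arcs = u.arcs ++ (q.arcs ++ v.arcs) ∧
    q.first = u.last ∧ v.first = q.last

/-- The elementary circuit `q` can be cut out of `p = u q v`: all of its inner nodes
occur somewhere else in the remaining path `u v`. -/
def Removable (p u q v : SPath G) : Prop :=
  Splits p u q v ∧ q.IsElemCircuit ∧
    ∀ x ∈ q.innerNodes, x ∈ u.nodes ∨ x ∈ v.nodes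

/-- One step of the decomposition: cut the removable elementary circuit `q` out of `p`,
obtaining `p₂`. -/
def CutStep (p p₂ q : SPath G) : Prop :=
  ∃ u v, Removable p u q v ∧ p₂.first = u.first ∧ p₂.arcs = u.arcs ++ v.arcs

/-- `IsCPD p p' Q` : `(p', Q)` is a complete path decomposition of `p`, where the
multiset `Q` records the removed elementary circuits with their multiplicities. -/
inductive IsCPD : SPath G → SPath G → Multiset (SPath G) → Prop
  | done (p : SPath G) (h : ∀ u q v, ¬ Removable p u q v) : IsCPD p p 0
  | step (p p₂ p' q : SPath G) (Q : Multiset (SPath G)) :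
      CutStep p p₂ q → IsCPD p₂ p' Q → IsCPD p p' (q ::ₘ Q)

/-- Assumption A: all circuits of the decomposition have nonzero shift, and no two distinct
circuits have both the same source node and the same shift. -/
def AssumptionA (Q : Multiset (SPath G)) : Prop :=
  (∀ q ∈ Q, q.shift ≠ 0) ∧
    ∀ q ∈ Q, ∀ r ∈ Q, q ≠ r → (q.first, q.shift) ≠ (r.first, r.shift)

/-- `ps` is a factorization of the path `p` into consecutive subpaths. -/
def IsFactorization (p : SPath G) (ps : List (SPath G)) : Prop :=
  ps ≠ [] ∧ ps.Chain' (fun a b => b.first = a.last) ∧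
    (∀ q ∈ ps.head?, q.first = p.first) ∧ p.arcs = (ps.map SPath.arcs).flatten

/-- One move of the canonical-path-composition algorithm: a factor which is a circuit with
negative shift is postponed, or a factor which is a circuit with positive shift is
anticipated. -/
inductive MoveStep : List (SPath G) → List (SPath G) → Prop
  | postpone (a b d : List (SPath G)) (c : SPath G) (hc : c.IsCircuit) (hs : c.shift < 0) :
      MoveStep (a ++ c :: (b ++ d)) (a ++ (b ++ c :: d))
  | anticipate (a b d : List (SPath G)) (c : SPath G) (hc : c.IsCircuit) (hs : 0 < c.shift) :
      MoveStep (a ++ (b ++ c :: d)) (a ++ c :: (b ++ d))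

/-- Weights of pseudo-circuits of `G_S` from node `(i, 0)` to node `(i, s)`. -/
def PCWeights (G : StaticGraph n) (S : Set ℤ) (i : Fin n) (s : ℤ) : Set ℚ :=
  {w | ∃ p : SPath G, p.shiftsIn 0 S ∧ p.first = i ∧ p.last = i ∧ p.shift = s ∧ p.weight = w}

/-- The path `r^{(h)} = q₁^{(-s₂)·h} p' q₂^{s₁·h}`. -/
def rpath (q₁ p' q₂ : SPath G)
    (hc₁ : q₁.IsCircuit) (hc₂ : q₂.IsCircuit)
    (h₁ : p'.first = q₁.last) (h₂ : q₂.first = p'.last) (h : ℕ) : SPath G :=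
  (SPath.npow q₁ hc₁ ((-q₂.shift).toNat * h)).append
    (p'.append (SPath.npow q₂ hc₂ (q₁.shift.toNat * h))
      ((SPath.npow_first q₂ hc₂ _).trans h₂))
    ((h₁.trans hc₁.symm).trans (SPath.npow_last q₁ hc₁ _).symm)

/-- `x` is a nonzero solution in `S` which is minimal (componentwise) and has minimal
carrier among nonzero solutions. -/
def isMinSol {ι : Type*} (S : Set (ι → ℕ)) (x : ι → ℕ) : Prop :=
  x ∈ S ∧ x ≠ 0 ∧
    ∀ y ∈ S, y ≠ x → y ≠ 0 → ¬ y ≤ x ∧ ¬ ({i | y i ≠ 0} ⊂ {i | x i ≠ 0})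

/-- Solutions `(y, z) ∈ ℕ₀^m × ℕ₀^(m-1)` of the Diophantine system
`z_l = ∑_{j ≤ l} s_j y_j` (for `l ∈ [1, m-1]`) and `∑_j s_j y_j = 0`. -/
def DioSol (m : ℕ) (s : Fin m → ℤ) : Set (Fin m ⊕ Fin (m - 1) → ℕ) :=
  {x | (∀ l : Fin (m - 1), (x (Sum.inr l) : ℤ) =
          ∑ j ∈ Finset.univ.filter (fun j : Fin m => (j : ℕ) ≤ (l : ℕ)),
            s j * (x (Sum.inl j) : ℤ)) ∧
       (∑ j : Fin m, s j * (x (Sum.inl j) : ℤ)) = 0}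

/-- The candidate minimal solution `x^{(i,j)}`: `y_i = -s_j/g`, `y_j = s_i/g`,
`z_l = s_i·(-s_j)/g` for `l ∈ [i, j-1]`, all other entries `0`, where `g = gcd(s_i, -s_j)`. -/
def dioMinVec (m : ℕ) (s : Fin m → ℤ) (i j : Fin m) : Fin m ⊕ Fin (m - 1) → ℕ :=
  fun l => match l with
  | Sum.inl a =>
      if a = i then (s j).natAbs / Int.gcd (s i) (s j)
      else if a = j then (s i).natAbs / Int.gcd (s i) (s j)
      else 0
  | Sum.inr a =>
      if (i : ℕ) ≤ (a : ℕ) ∧ (a : ℕ) < (j : ℕ)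
      then (s i).natAbs * ((s j).natAbs / Int.gcd (s i) (s j))
      else 0

end Periodic

open Periodic Periodic.SPath


namespace Periodic
namespace SPath

variable {n : ℕ} {G : StaticGraph n}

theorem arcs_append' (p q : SPath G) (h : q.first = p.last) :
    (p.append q h).arcs = p.arcs ++ q.arcs := rfl

theorem shift_append' (p q : SPath G) (h : q.first = p.last) :
    (p.append q h).shift = p.shift + q.shift := by
  simp [SPath.shift, arcs_append']

theorem weight_append' (p q : SPath G) (h : q.first = p.last) :
    (p.append q h).weight = p.weight + q.weight := by
  simp [SPath.weight, arcs_append']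

theorem npow_succ' (q : SPath G) (hc : q.IsCircuit) (x : ℕ) :
    npow q hc (x + 1) = q.append (npow q hc x) (((npowAux q hc x).2.1).trans hc) := rfl

theorem npow_zero_arcs' (q : SPath G) (hc : q.IsCircuit) : (npow q hc 0).arcs = [] := rfl

theorem npow_shift' (q : SPath G) (hc : q.IsCircuit) (x : ℕ) :
    (npow q hc x).shift = (x : ℤ) * q.shift := by
  induction x with
  | zero => simp [npow, npowAux, SPath.shift, SPath.nil]
  | succ x ih => rw [npow_succ']; refine (shift_append' _ _ _).trans ?_; rw [ih]; push_cast; ring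

theorem npow_weight' (q : SPath G) (hc : q.IsCircuit) (x : ℕ) :
    (npow q hc x).weight = (x : ℚ) * q.weight := by
  induction x with
  | zero => simp [npow, npowAux, SPath.weight, SPath.nil]
  | succ x ih => rw [npow_succ']; refine (weight_append' _ _ _).trans ?_; rw [ih]; push_cast; ring

theorem shift_bound_of_isArc {e : Arc n} (h : G.IsArc e) : -1 ≤ e.shift ∧ e.shift ≤ 1 := by
  by_contra hcon
  have hne : e.shift ≠ -1 ∧ e.shift ≠ 0 ∧ e.shift ≠ 1 := by omega
  have : G.M e.shift = Matrix.of fun _ _ => ⊥ := by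
    unfold StaticGraph.M
    rw [if_neg hne.1, if_neg hne.2.1, if_neg hne.2.2]
  exact h (by rw [this]; rfl)

theorem neg_length_le_sum : ∀ (l : List ℤ), (∀ x ∈ l, -1 ≤ x) → -(l.length : ℤ) ≤ l.sum := by
  intro l
  induction l with
  | nil => simp
  | cons a t ih =>
    intro h
    have h1 := h a (by simp)
    have h2 := ih (fun x hx => h x (by simp [hx]))
    simp only [List.sum_cons, List.length_cons]
    push_cast
    omega

theorem neg_len_le_prefixShift (p : SPath G) (i : ℕ) : -(p.len : ℤ) ≤ p.prefixShift i := by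
  have h1 : ∀ x ∈ (p.arcs.take i).map Arc.shift, (-1 : ℤ) ≤ x := by
    intro x hx
    simp only [List.mem_map] at hx
    obtain ⟨e, he, rfl⟩ := hx
    exact (shift_bound_of_isArc (p.valid e (List.mem_of_mem_take he))).1
  have h2 := neg_length_le_sum _ h1
  have h3 : ((p.arcs.take i).map Arc.shift).length ≤ p.len := by
    simp [SPath.len, List.length_take]
  unfold prefixShift
  omega

theorem lshift_le' (p : SPath G) (i : ℕ) : p.lshift ≤ p.prefixShift i := by
  rcases le_or_gt i p.arcs.length with hi | hi
  · exact Finset.inf'_le (fun j : Fin (p.arcs.length + 1) => p.prefixShift j)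
      (Finset.mem_univ (⟨i, by omega⟩ : Fin (p.arcs.length + 1)))
  · have he : p.prefixShift i = p.prefixShift p.arcs.length := by
      unfold prefixShift
      rw [List.take_of_length_le hi.le, List.take_length]
    rw [he]
    exact Finset.inf'_le (fun j : Fin (p.arcs.length + 1) => p.prefixShift j)
      (Finset.mem_univ (⟨p.arcs.length, by omega⟩ : Fin (p.arcs.length + 1)))

theorem lshift_le_zero' (p : SPath G) : p.lshift ≤ 0 := by
  have := lshift_le' p 0
  simpa [prefixShift] using this

theorem lshift_le_shift' (p : SPath G) : p.lshift ≤ p.shift := by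
  have h := lshift_le' p p.arcs.length
  have he : p.prefixShift p.arcs.length = p.shift := by
    unfold prefixShift SPath.shift
    rw [List.take_length]
  omega

theorem neg_len_le_lshift (p : SPath G) : -(p.len : ℤ) ≤ p.lshift :=
  Finset.le_inf' _ _ fun i _ => neg_len_le_prefixShift p i

theorem prefixShift_append_le (p q : SPath G) (h : q.first = p.last) (i : ℕ) :
    min p.lshift (p.shift + q.lshift) ≤ (p.append q h).prefixShift i := by
  by_cases hc : i ≤ p.arcs.length
  · have he : (p.append q h).prefixShift i = p.prefixShift i := by
      unfold prefixShift
      rw [arcs_append', List.take_append,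
        Nat.sub_eq_zero_of_le hc]
      simp
    rw [he]
    exact le_trans (min_le_left _ _) (lshift_le' p i)
  · have he : (p.append q h).prefixShift i = p.shift + q.prefixShift (i - p.arcs.length) := by
      unfold prefixShift SPath.shift
      rw [arcs_append', List.take_append,
        List.take_of_length_le (by omega), List.map_append, List.sum_append]
    rw [he]
    exact le_trans (min_le_right _ _)
      (by have := lshift_le' q (i - p.arcs.length); omega)

theorem min_le_lshift_append (p q : SPath G) (h : q.first = p.last) :
    min p.lshift (p.shift + q.lshift) ≤ (p.append q h).lshift :=
  Finset.le_inf' _ _ fun i _ => prefixShift_append_le p q h i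

theorem lshift_npow_pos' (q : SPath G) (hc : q.IsCircuit) (hs : 0 < q.shift) (x : ℕ) :
    q.lshift ≤ (npow q hc x).lshift := by
  induction x with
  | zero =>
    have h1 := neg_len_le_lshift (npow q hc 0)
    have h2 : (npow q hc 0).len = 0 := by simp [SPath.len, npow_zero_arcs']
    have h3 := lshift_le_zero' q
    omega
  | succ x ih =>
    rw [npow_succ']
    refine le_trans ?_ (min_le_lshift_append q (npow q hc x) _)
    rw [le_min_iff]
    exact ⟨le_refl _, by omega⟩

theorem lshift_npow_neg' (q : SPath G) (hc : q.IsCircuit) (hs : q.shift < 0) (x : ℕ) :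
    (x : ℤ) * q.shift + q.lshift ≤ (npow q hc x).lshift := by
  induction x with
  | zero =>
    have h1 := neg_len_le_lshift (npow q hc 0)
    have h2 : (npow q hc 0).len = 0 := by simp [SPath.len, npow_zero_arcs']
    have h3 := lshift_le_zero' q
    push_cast
    omega
  | succ x ih =>
    rw [npow_succ']
    refine le_trans ?_ (min_le_lshift_append q (npow q hc x) _)
    rw [le_min_iff]
    constructor
    · have : ((x : ℤ) + 1) * q.shift ≤ 0 := by
        have hx : (0 : ℤ) ≤ (x : ℤ) + 1 := by positivity
        nlinarith
      push_cast
      nlinarith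
    · push_cast
      nlinarith

end SPath
end Periodic


theorem stmt2 {n : ℕ} (G : StaticGraph n) (q₁ p' q₂ : SPath G)
    (hc₁ : q₁.IsCircuit) (hc₂ : q₂.IsCircuit)
    (h₁ : p'.first = q₁.last) (h₂ : q₂.first = p'.last)
    (hl₁ : q₁.len ≤ n) (hl₂ : q₂.len ≤ n)
    (hs₁ : 0 < q₁.shift) (hs₂ : q₂.shift < 0)
    (hw : 0 < -(q₂.shift : ℚ) * q₁.weight + (q₁.shift : ℚ) * q₂.weight) :
    HasInfWeightPath G Spos ∧
    (∀ h : ℕ, 1 ≤ h →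
      p'.lshift - (n : ℤ) ≤ (rpath q₁ p' q₂ hc₁ hc₂ h₁ h₂ h).lshift) ∧
    ∃ u v : Fin n × ℤ,
      (∀ h : ℕ, 1 ≤ h →
        (rpath q₁ p' q₂ hc₁ hc₂ h₁ h₂ h).shiftsIn u.2 Spos ∧
        ((rpath q₁ p' q₂ hc₁ hc₂ h₁ h₂ h).first, u.2) = u ∧
        ((rpath q₁ p' q₂ hc₁ hc₂ h₁ h₂ h).last,
          u.2 + (rpath q₁ p' q₂ hc₁ hc₂ h₁ h₂ h).shift) = v) ∧
      ∀ h : ℕ, 1 ≤ h →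
        (rpath q₁ p' q₂ hc₁ hc₂ h₁ h₂ h).weight <
          (rpath q₁ p' q₂ hc₁ hc₂ h₁ h₂ (h + 1)).weight := by
  -- cast facts
  have e₂ : ((-q₂.shift).toNat : ℤ) = -q₂.shift := Int.toNat_of_nonneg (by omega)
  have e₁ : (q₁.shift.toNat : ℤ) = q₁.shift := Int.toNat_of_nonneg (by omega)
  have hA : ∀ h : ℕ, (((-q₂.shift).toNat * h : ℕ) : ℤ) = -q₂.shift * (h : ℤ) := by
    intro h; push_cast [e₂]; ring
  have hB : ∀ h : ℕ, ((q₁.shift.toNat * h : ℕ) : ℤ) = q₁.shift * (h : ℤ) := by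
    intro h; push_cast [e₁]; ring
  have e₂Q : ((-q₂.shift).toNat : ℚ) = -(q₂.shift : ℚ) := by
    rw [← Int.cast_natCast (R := ℚ), e₂, Int.cast_neg]
  have e₁Q : (q₁.shift.toNat : ℚ) = (q₁.shift : ℚ) := by
    rw [← Int.cast_natCast (R := ℚ), e₁]
  -- shift of rpath
  have hshift : ∀ h : ℕ, (rpath q₁ p' q₂ hc₁ hc₂ h₁ h₂ h).shift = p'.shift := by
    intro h
    unfold rpath
    refine (shift_append' _ _ _).trans ?_; rw [shift_append', npow_shift', npow_shift', hA h, hB h]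
    ring
  -- weight of rpath
  have hweight : ∀ h : ℕ, (rpath q₁ p' q₂ hc₁ hc₂ h₁ h₂ h).weight =
      p'.weight + (h : ℚ) * (-(q₂.shift : ℚ) * q₁.weight + (q₁.shift : ℚ) * q₂.weight) := by
    intro h
    unfold rpath
    refine (weight_append' _ _ _).trans ?_; rw [weight_append', npow_weight', npow_weight']
    push_cast [e₂Q, e₁Q]
    ring
  -- first and last
  have hfirst : ∀ h : ℕ, (rpath q₁ p' q₂ hc₁ hc₂ h₁ h₂ h).first = q₁.first := by
    intro h
    exact npow_first q₁ hc₁ _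
  have hlast : ∀ h : ℕ, (rpath q₁ p' q₂ hc₁ hc₂ h₁ h₂ h).last = q₂.first := by
    intro h
    unfold rpath
    refine (last_append _ _ _).trans ?_; rw [last_append, npow_last]
  -- lshift lower bound (for all h)
  have hlsh : ∀ h : ℕ, p'.lshift - (n : ℤ) ≤ (rpath q₁ p' q₂ hc₁ hc₂ h₁ h₂ h).lshift := by
    intro h
    unfold rpath
    refine le_trans ?_ (min_le_lshift_append _ _ _)
    rw [le_min_iff]
    have l1 := lshift_npow_pos' q₁ hc₁ hs₁ ((-q₂.shift).toNat * h)
    have l2 := lshift_npow_neg' q₂ hc₂ hs₂ (q₁.shift.toNat * h)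
    have l3 := neg_len_le_lshift q₁
    have l4 := neg_len_le_lshift q₂
    have l5 := lshift_le_zero' p'
    have l6 := lshift_le_shift' p'
    have hln₁ : (q₁.len : ℤ) ≤ (n : ℤ) := by exact_mod_cast hl₁
    have hln₂ : (q₂.len : ℤ) ≤ (n : ℤ) := by exact_mod_cast hl₂
    have hAsh : (SPath.npow q₁ hc₁ ((-q₂.shift).toNat * h)).shift
        = -q₂.shift * (h : ℤ) * q₁.shift := by rw [npow_shift', hA h]
    have hAsh0 : 0 ≤ -q₂.shift * (h : ℤ) * q₁.shift :=
      mul_nonneg (mul_nonneg (by omega) (Int.natCast_nonneg h)) (by omega)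
    constructor
    · omega
    · have hm := min_le_lshift_append p' (SPath.npow q₂ hc₂ (q₁.shift.toNat * h))
        ((SPath.npow_first q₂ hc₂ _).trans h₂)
      have hzero : -q₂.shift * (h : ℤ) * q₁.shift
          + q₁.shift * (h : ℤ) * q₂.shift = 0 := by ring
      rw [hB h] at l2
      rw [hAsh]
      rcases le_total p'.lshift (p'.shift + (SPath.npow q₂ hc₂ (q₁.shift.toNat * h)).lshift)
        with hmin | hmin
      · rw [min_eq_left hmin] at hm
        omega
      · rw [min_eq_right hmin] at hm
        omega
  -- shiftsIn
  set K : ℤ := (n : ℤ) + 1 - p'.lshift with hK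
  have hsin : ∀ h : ℕ, (rpath q₁ p' q₂ hc₁ hc₂ h₁ h₂ h).shiftsIn K Spos := by
    intro h i _
    have h1 := lshift_le' (rpath q₁ p' q₂ hc₁ hc₂ h₁ h₂ h) i
    have h2 := hlsh h
    simp only [Spos, Set.mem_setOf_eq]
    omega
  -- weight increasing
  have hwinc : ∀ h : ℕ, (rpath q₁ p' q₂ hc₁ hc₂ h₁ h₂ h).weight <
      (rpath q₁ p' q₂ hc₁ hc₂ h₁ h₂ (h + 1)).weight := by
    intro h
    rw [hweight h, hweight (h + 1)]
    push_cast
    nlinarith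
  refine ⟨?_, fun h _ => hlsh h, ?_⟩
  · refine ⟨(q₁.first, K), (q₂.first, K + p'.shift),
      fun h => rpath q₁ p' q₂ hc₁ hc₂ h₁ h₂ (h + 1), fun _ => K,
      fun h => hsin (h + 1), fun h => ?_, fun h => hwinc (h + 1)⟩
    exact ⟨by rw [hfirst (h + 1)], by rw [hlast (h + 1), hshift (h + 1)]⟩
  · refine ⟨(q₁.first, K), (q₂.first, K + p'.shift), fun h _ => ?_, fun h _ => hwinc h⟩
    exact ⟨hsin h, by rw [hfirst h], by rw [hlast h, hshift h]⟩
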